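/- Let T ∈ ℝ^{n₁×…×n_d} be symmetric with respect to a pair of indices {p,q} (i.e., n_p = n_q and interchanging the p-th and q-th indices leaves all entries unchanged). Then there exists a best rank one approximation a·(u₁⊗…⊗u_d) of T with u_q = ±u_p, i.e., symmetric with respect to {p,q}. -/

import Mathlib

noncomputable section

/-- The decomposable tensor `x₁ ⊗ ⋯ ⊗ x_d`, as a multi-indexed array. -/
def dtens {ι : Type*} [Fintype ι] {n : ι → ℕ} (x : ∀ j, Fin (n j) → ℝ) :
    (∀ j, Fin (n j)) → ℝ :=
  fun idx => ∏ j, x j (idx j)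

/-- Entrywise inner product of tensors. -/
def tinner {ι : Type*} [Fintype ι] [DecidableEq ι] {n : ι → ℕ}
    (S T : (∀ j, Fin (n j)) → ℝ) : ℝ :=
  ∑ idx, S idx * T idx

/-- Hilbert–Schmidt norm of a tensor. -/
def hsNorm {ι : Type*} [Fintype ι] [DecidableEq ι] {n : ι → ℕ}
    (T : (∀ j, Fin (n j)) → ℝ) : ℝ :=
  Real.sqrt (∑ idx, T idx ^ 2)

/-- `v` is a unit vector in `ℝ^m`. -/
def isUnitVec {m : ℕ} (v : Fin m → ℝ) : Prop := ∑ i, v i ^ 2 = 1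

/-- The spectral (`(∞,2)`-Schatten) norm of a tensor: the supremum of
`|⟨T, x₁ ⊗ ⋯ ⊗ x_d⟩|` over unit vectors `x_j`. -/
def specNorm {ι : Type*} [Fintype ι] [DecidableEq ι] {n : ι → ℕ}
    (T : (∀ j, Fin (n j)) → ℝ) : ℝ :=
  sSup {r | ∃ x : ∀ j, Fin (n j) → ℝ, (∀ j, isUnitVec (x j)) ∧ r = |tinner T (dtens x)|}

/-- The multi-index obtained from `idx` by interchanging the entries in positions `p`
and `q` (which have equal dimensions). -/
def swapAt {d : ℕ} {n : Fin d → ℕ} (p q : Fin d) (hpq : n p = n q)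
    (idx : ∀ j, Fin (n j)) : ∀ j, Fin (n j) :=
  fun j =>
    if h : j = p then Fin.cast (show n q = n j by rw [h, hpq]) (idx q)
    else if h' : j = q then Fin.cast (show n p = n j by rw [h', hpq]) (idx p)
    else idx j

/-!
A best rank one approximation is `⟨T, x⟩ · x₁ ⊗ ⋯ ⊗ x_d` for any unit tuple `x` maximizing
`|⟨T, x₁ ⊗ ⋯ ⊗ x_d⟩|`. Freezing the factors of a maximizer outside `{p, q}` makes `⟨T, ·⟩` a
bilinear form `B` on `ℝ^{n_p}`, symmetric because `T` is, and `|B(u, v)|` reaches its maximum `M`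
over unit vectors at `(x_p, x_q)`. The polarization identity
`B(u+v, u+v) - B(u-v, u-v) = 4 B(u, v)` and the parallelogram law force `|B(y, y)| = M ‖y‖²` for
a nonzero `y ∈ {x_p + x_q, x_p - x_q}`, so putting `y / ‖y‖` into both slots gives a maximizer
with equal `p`-th and `q`-th factors.
-/

namespace LinearMap.BilinForm

theorem apply_smul_smul_self {E : Type*} [AddCommGroup E] [Module ℝ E]
    (B : LinearMap.BilinForm ℝ E) (c : ℝ) (y : E) :
    B (c • y) (c • y) = c ^ 2 * B y y := by
  simp only [map_smul, LinearMap.smul_apply, smul_eq_mul]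
  ring

theorem abs_apply_self_le_mul_norm_sq {E : Type*} [NormedAddCommGroup E] [NormedSpace ℝ E]
    (B : LinearMap.BilinForm ℝ E) {M : ℝ} (hM : ∀ u, ‖u‖ = 1 → |B u u| ≤ M) (y : E) :
    |B y y| ≤ M * ‖y‖ ^ 2 := by
  rcases eq_or_ne y 0 with rfl | hy
  · simp
  have hw := hM (‖y‖⁻¹ • y) (by
    rw [norm_smul, norm_inv, norm_norm, inv_mul_cancel₀ (norm_ne_zero_iff.2 hy)])
  rw [apply_smul_smul_self, abs_mul, abs_pow, abs_inv, abs_norm, inv_pow,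
    inv_mul_le_iff₀ (by positivity), mul_comm] at hw
  exact hw

theorem exists_norm_eq_one_abs_apply_self_eq {E : Type*} [NormedAddCommGroup E]
    [InnerProductSpace ℝ E] (B : LinearMap.BilinForm ℝ E) (hB : B.IsSymm) {M : ℝ}
    (hM : ∀ u, ‖u‖ = 1 → |B u u| ≤ M) {u v : E} (hu : ‖u‖ = 1) (hv : ‖v‖ = 1)
    (huv : |B u v| = M) : ∃ w, ‖w‖ = 1 ∧ |B w w| = M := by
  have hpar : ‖u + v‖ ^ 2 + ‖u - v‖ ^ 2 = 4 := by
    rw [parallelogram_law_with_norm ℝ, hu, hv]; norm_num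
  have hpol : B (u + v) (u + v) - B (u - v) (u - v) = 4 * B u v := by
    simp only [map_add, map_sub, LinearMap.add_apply, LinearMap.sub_apply, hB.eq v u]
    ring
  have hplus := abs_apply_self_le_mul_norm_sq B hM (u + v)
  have hminus := abs_apply_self_le_mul_norm_sq B hM (u - v)
  -- `4 M = |B (u+v) (u+v) - B (u-v) (u-v)| ≤ M (‖u+v‖² + ‖u-v‖²) = 4 M`, so both bounds are
  -- tight.
  have htri := abs_sub (B (u + v) (u + v)) (B (u - v) (u - v))
  rw [hpol, abs_mul, huv, abs_of_pos four_pos] at htri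
  have hsum : M * ‖u + v‖ ^ 2 + M * ‖u - v‖ ^ 2 = 4 * M := by
    rw [← mul_add, hpar, mul_comm]
  obtain ⟨y, hy0, hy⟩ : ∃ y : E, y ≠ 0 ∧ |B y y| = M * ‖y‖ ^ 2 := by
    by_cases h : u + v = 0
    · refine ⟨u - v, fun h' => ?_, by linarith⟩
      rw [h, h', norm_zero] at hpar; norm_num at hpar
    · exact ⟨u + v, h, by linarith⟩
  refine ⟨‖y‖⁻¹ • y, ?_, ?_⟩
  · rw [norm_smul, norm_inv, norm_norm, inv_mul_cancel₀ (norm_ne_zero_iff.2 hy0)]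
  · rw [apply_smul_smul_self, abs_mul, hy, abs_pow, abs_inv, abs_norm]
    field_simp

end LinearMap.BilinForm

open Finset

section BestRankOne

variable {ι : Type*} [Fintype ι] [DecidableEq ι] {n : ι → ℕ}

theorem sum_sq_dtens {x : ∀ j, Fin (n j) → ℝ} (hx : ∀ j, isUnitVec (x j)) :
    ∑ idx, dtens x idx ^ 2 = 1 := by
  simp_rw [dtens, ← prod_pow]
  rw [← Fintype.prod_sum fun j i => x j i ^ 2]
  exact prod_eq_one fun j _ => hx j

theorem sum_sq_sub_smul_dtens (T : (∀ j, Fin (n j)) → ℝ) (c : ℝ) {x : ∀ j, Fin (n j) → ℝ}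
    (hx : ∀ j, isUnitVec (x j)) :
    ∑ idx, (T - c • dtens x) idx ^ 2
      = ∑ idx, T idx ^ 2 - 2 * c * tinner T (dtens x) + c ^ 2 := by
  have h : ∀ idx, (T - c • dtens x) idx ^ 2
      = T idx ^ 2 - 2 * c * (T idx * dtens x idx) + c ^ 2 * dtens x idx ^ 2 := fun idx => by
    simp only [Pi.sub_apply, Pi.smul_apply, smul_eq_mul]; ring
  simp_rw [h, sum_add_distrib, sum_sub_distrib, ← mul_sum, sum_sq_dtens hx, tinner, mul_one]

theorem hsNorm_sub_tinner_smul_dtens_le {T : (∀ j, Fin (n j)) → ℝ} {x : ∀ j, Fin (n j) → ℝ}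
    (hx : ∀ j, isUnitVec (x j))
    (hmax : ∀ y : ∀ j, Fin (n j) → ℝ, (∀ j, isUnitVec (y j)) →
      |tinner T (dtens y)| ≤ |tinner T (dtens x)|)
    (s : ℝ) {y : ∀ j, Fin (n j) → ℝ} (hy : ∀ j, isUnitVec (y j)) :
    hsNorm (T - tinner T (dtens x) • dtens x) ≤ hsNorm (T - s • dtens y) := by
  apply Real.sqrt_le_sqrt
  rw [sum_sq_sub_smul_dtens T _ hx, sum_sq_sub_smul_dtens T s hy]
  nlinarith [sq_le_sq.2 (hmax y hy), sq_nonneg (s - tinner T (dtens y))]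

theorem isUnitVec_iff_norm_eq_one {m : ℕ} (w : EuclideanSpace ℝ (Fin m)) :
    isUnitVec w ↔ ‖w‖ = 1 := by
  rw [isUnitVec, ← EuclideanSpace.real_norm_sq_eq,
    pow_eq_one_iff_of_nonneg (norm_nonneg _) two_ne_zero]

theorem isCompact_setOf_isUnitVec (m : ℕ) : IsCompact {v : Fin m → ℝ | isUnitVec v} := by
  convert (isCompact_sphere (0 : EuclideanSpace ℝ (Fin m)) 1).image (PiLp.continuous_ofLp 2 _)
  ext v
  constructor
  · intro hv
    exact ⟨WithLp.toLp 2 v,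
      by simpa using (isUnitVec_iff_norm_eq_one (WithLp.toLp 2 v)).1 hv, rfl⟩
  · rintro ⟨w, hw, rfl⟩
    exact (isUnitVec_iff_norm_eq_one w).2 (by simpa using hw)

theorem exists_forall_abs_tinner_dtens_le (hn : ∀ j, 0 < n j) (T : (∀ j, Fin (n j)) → ℝ) :
    ∃ x : ∀ j, Fin (n j) → ℝ, (∀ j, isUnitVec (x j)) ∧
      ∀ y : ∀ j, Fin (n j) → ℝ, (∀ j, isUnitVec (y j)) →
        |tinner T (dtens y)| ≤ |tinner T (dtens x)| := by
  have hK : IsCompact (Set.univ.pi fun j => {v : Fin (n j) → ℝ | isUnitVec v}) :=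
    isCompact_univ_pi fun j => isCompact_setOf_isUnitVec (n j)
  have hK₀ : (Set.univ.pi fun j => {v : Fin (n j) → ℝ | isUnitVec v}).Nonempty :=
    ⟨fun j => Pi.single ⟨0, hn j⟩ 1, fun j _ => by simp [isUnitVec, Pi.single_apply]⟩
  have hcont : Continuous fun y : ∀ j, Fin (n j) → ℝ => |tinner T (dtens y)| := by
    unfold tinner dtens; fun_prop
  obtain ⟨x, hx, hmax⟩ := hK.exists_isMaxOn hK₀ hcont.continuousOn
  exact ⟨x, fun j => hx j trivial, fun y hy => hmax fun j _ => hy j⟩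

end BestRankOne

section Slots

variable {d : ℕ} {n : Fin d → ℕ} {p q : Fin d}

theorem swapAt_apply_left (hpq : n p = n q) (idx : ∀ j, Fin (n j)) :
    swapAt p q hpq idx p = Fin.cast hpq.symm (idx q) := by
  simp [swapAt]

theorem swapAt_apply_right (hne : p ≠ q) (hpq : n p = n q) (idx : ∀ j, Fin (n j)) :
    swapAt p q hpq idx q = Fin.cast hpq (idx p) := by
  simp [swapAt, hne.symm]

theorem swapAt_apply_of_ne (hpq : n p = n q) (idx : ∀ j, Fin (n j)) {j : Fin d}
    (hjp : j ≠ p) (hjq : j ≠ q) : swapAt p q hpq idx j = idx j := by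
  simp [swapAt, hjp, hjq]

theorem swapAt_involutive (hne : p ≠ q) (hpq : n p = n q) :
    Function.Involutive (swapAt p q hpq) := by
  intro idx
  funext j
  by_cases hjp : j = p
  · subst hjp; simp [swapAt, hne.symm]
  by_cases hjq : j = q
  · subst hjq; simp [swapAt, hne.symm]
  simp [swapAt, hjp, hjq]

theorem isUnitVec_comp_cast {m m' : ℕ} (h : m' = m) {v : Fin m → ℝ} (hv : isUnitVec v) :
    isUnitVec (v ∘ Fin.cast h) := by
  rw [isUnitVec, ← hv]
  exact Fintype.sum_equiv (finCongr h) _ _ fun _ => rfl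

def setSlots (hpq : n p = n q) (x : ∀ j, Fin (n j) → ℝ) (u v : Fin (n p) → ℝ) :
    ∀ j, Fin (n j) → ℝ :=
  Function.update (Function.update x p u) q (v ∘ Fin.cast hpq.symm)

variable (hpq : n p = n q) (x : ∀ j, Fin (n j) → ℝ) (u v : Fin (n p) → ℝ)

theorem setSlots_apply_left (hne : p ≠ q) : setSlots hpq x u v p = u := by
  rw [setSlots, Function.update_of_ne hne, Function.update_self]

theorem setSlots_apply_right : setSlots hpq x u v q = v ∘ Fin.cast hpq.symm := by
  rw [setSlots, Function.update_self]

theorem setSlots_apply_right_cast (k : Fin (n p)) :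
    setSlots hpq x u v q (Fin.cast hpq k) = v k := by
  rw [setSlots_apply_right]
  simp

theorem setSlots_apply_of_ne {j : Fin d} (hjp : j ≠ p) (hjq : j ≠ q) :
    setSlots hpq x u v j = x j := by
  rw [setSlots, Function.update_of_ne hjq, Function.update_of_ne hjp]

theorem setSlots_self (hne : p ≠ q) : setSlots hpq x (x p) (x q ∘ Fin.cast hpq) = x := by
  funext j
  by_cases hjp : j = p
  · subst hjp; exact setSlots_apply_left hpq x _ _ hne
  by_cases hjq : j = q
  · subst hjq; rw [setSlots_apply_right]; rfl
  exact setSlots_apply_of_ne hpq x _ _ hjp hjq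

theorem isUnitVec_setSlots (hne : p ≠ q) (hx : ∀ j, isUnitVec (x j)) (hu : isUnitVec u)
    (hv : isUnitVec v) (j : Fin d) : isUnitVec (setSlots hpq x u v j) := by
  by_cases hjp : j = p
  · subst hjp; rwa [setSlots_apply_left hpq x _ _ hne]
  by_cases hjq : j = q
  · subst hjq; rw [setSlots_apply_right]; exact isUnitVec_comp_cast _ hv
  rw [setSlots_apply_of_ne hpq x _ _ hjp hjq]; exact hx j

theorem dtens_setSlots (hne : p ≠ q) (idx : ∀ j, Fin (n j)) :
    dtens (setSlots hpq x u v) idx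
      = u (idx p) * v (Fin.cast hpq.symm (idx q)) *
          ∏ j ∈ (univ.erase p).erase q, x j (idx j) := by
  have hq : q ∈ univ.erase p := mem_erase.2 ⟨hne.symm, mem_univ q⟩
  rw [dtens, ← mul_prod_erase _ _ (mem_univ p), ← mul_prod_erase _ _ hq, ← mul_assoc,
    setSlots_apply_left hpq x u v hne, setSlots_apply_right]
  congr 1
  refine prod_congr rfl fun j hj => ?_
  obtain ⟨hjq, hjp, -⟩ := mem_erase.1 hj |>.imp_right mem_erase.1
  rw [setSlots_apply_of_ne hpq x u v hjp hjq]

end Slots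

section SlotForm

variable {d : ℕ} {n : Fin d → ℕ} {p q : Fin d} (hpq : n p = n q)
  (T : (∀ j, Fin (n j)) → ℝ) (x : ∀ j, Fin (n j) → ℝ)

/-- The bilinear form `(u, v) ↦ ⟨T, setSlots hpq x u v⟩` (see `slotForm_apply`). -/
def slotForm : LinearMap.BilinForm ℝ (EuclideanSpace ℝ (Fin (n p))) :=
  LinearMap.mk₂ ℝ
    (fun u v => ∑ idx, u (idx p) * v (Fin.cast hpq.symm (idx q)) *
      (T idx * ∏ j ∈ (univ.erase p).erase q, x j (idx j)))
    (fun u u' v => by simp only [PiLp.add_apply, add_mul, sum_add_distrib])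
    (fun c u v => by simp only [PiLp.smul_apply, smul_eq_mul, mul_sum, mul_assoc])
    (fun u v v' => by simp only [PiLp.add_apply, mul_add, add_mul, sum_add_distrib])
    (fun c u v => by
      simp only [PiLp.smul_apply, smul_eq_mul, mul_sum]
      exact sum_congr rfl fun _ _ => by ring)

theorem slotForm_apply (hne : p ≠ q) (u v : EuclideanSpace ℝ (Fin (n p))) :
    slotForm hpq T x u v = tinner T (dtens (setSlots hpq x u v)) := by
  simp only [slotForm, LinearMap.mk₂_apply, tinner, dtens_setSlots hpq x _ _ hne]
  exact sum_congr rfl fun _ _ => by ring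

theorem slotForm_apply_toLp_self (hne : p ≠ q) :
    slotForm hpq T x (WithLp.toLp 2 (x p)) (WithLp.toLp 2 (x q ∘ Fin.cast hpq))
      = tinner T (dtens x) := by
  rw [slotForm_apply hpq T x hne, WithLp.ofLp_toLp, WithLp.ofLp_toLp, setSlots_self hpq x hne]

theorem abs_slotForm_apply_self_le (hne : p ≠ q) (hx : ∀ j, isUnitVec (x j))
    (hmax : ∀ y : ∀ j, Fin (n j) → ℝ, (∀ j, isUnitVec (y j)) →
      |tinner T (dtens y)| ≤ |tinner T (dtens x)|)
    (w : EuclideanSpace ℝ (Fin (n p))) (hw : ‖w‖ = 1) :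
    |slotForm hpq T x w w| ≤ |tinner T (dtens x)| := by
  have hw' := (isUnitVec_iff_norm_eq_one w).2 hw
  rw [slotForm_apply hpq T x hne]
  exact hmax _ (isUnitVec_setSlots hpq x _ _ hne hx hw' hw')

theorem slotForm_isSymm (hne : p ≠ q) (hsym : ∀ idx, T (swapAt p q hpq idx) = T idx) :
    (slotForm hpq T x).IsSymm := by
  refine ⟨fun u v => ?_⟩
  simp only [slotForm, LinearMap.mk₂_apply]
  rw [← Equiv.sum_comp (swapAt_involutive hne hpq).toPerm]
  refine sum_congr rfl fun idx _ => ?_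
  have hrest : ∏ j ∈ (univ.erase p).erase q, x j (swapAt p q hpq idx j)
      = ∏ j ∈ (univ.erase p).erase q, x j (idx j) := by
    refine prod_congr rfl fun j hj => ?_
    obtain ⟨hjq, hjp, -⟩ := mem_erase.1 hj |>.imp_right mem_erase.1
    rw [swapAt_apply_of_ne hpq idx hjp hjq]
  simp only [Function.Involutive.coe_toPerm, hsym, hrest, swapAt_apply_left,
    swapAt_apply_right hne, Fin.cast_cast, Fin.cast_eq_self]
  ring

end SlotForm

/-- If `T` is symmetric with respect to a pair of positions `{p, q}`, then `T` has a best
rank one approximation `a · u₁ ⊗ ⋯ ⊗ u_d` with `u_q = ± u_p`. -/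
theorem stmt8 {d : ℕ} {n : Fin d → ℕ} (hn : ∀ j, 0 < n j)
    (T : (∀ j, Fin (n j)) → ℝ)
    (p q : Fin d) (hne : p ≠ q) (hnpq : n p = n q)
    (hsym : ∀ idx, T (swapAt p q hnpq idx) = T idx) :
    ∃ (a : ℝ) (u : ∀ j, Fin (n j) → ℝ), (∀ j, isUnitVec (u j)) ∧
      (∀ (s : ℝ) (x : ∀ j, Fin (n j) → ℝ), (∀ j, isUnitVec (x j)) →
        hsNorm (T - a • dtens u) ≤ hsNorm (T - s • dtens x)) ∧
      ((∀ k, u q (Fin.cast hnpq k) = u p k) ∨ (∀ k, u q (Fin.cast hnpq k) = -u p k)) := by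
  obtain ⟨x, hx, hmax⟩ := exists_forall_abs_tinner_dtens_le hn T
  obtain ⟨w, hw, hBw⟩ := (slotForm hnpq T x).exists_norm_eq_one_abs_apply_self_eq
    (slotForm_isSymm hnpq T x hne hsym) (abs_slotForm_apply_self_le hnpq T x hne hx hmax)
    ((isUnitVec_iff_norm_eq_one _).1 (hx p))
    ((isUnitVec_iff_norm_eq_one _).1 (isUnitVec_comp_cast hnpq (hx q)))
    (by rw [slotForm_apply_toLp_self hnpq T x hne])
  rw [slotForm_apply hnpq T x hne] at hBw
  have hw' := (isUnitVec_iff_norm_eq_one w).2 hw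
  have hu := isUnitVec_setSlots hnpq x w w hne hx hw' hw'
  refine ⟨tinner T (dtens (setSlots hnpq x w w)), setSlots hnpq x w w, hu,
    fun s y hy => ?_, Or.inl fun k => ?_⟩
  · exact hsNorm_sub_tinner_smul_dtens_le hu
      (fun y hy => (hmax y hy).trans_eq hBw.symm) s hy
  · rw [setSlots_apply_right_cast, setSlots_apply_left hnpq x w w hne]
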